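/- arXiv:1108.1628 — 2 statements merged into one kernel-verified Lean document; each statement's English description precedes it below -/
import Mathlib

section
/- The distribution of unrooted quartet gene trees identifies the unrooted four-taxon species tree topology and its internal edge length: the map sending a pair (t, d), where t ∈ {0,1,2} indexes one of the three unrooted quartet topologies and d > 0 is a real number, to the probability vector (p₀, p₁, p₂) defined by p_t = 1 - (2/3)·exp(-d) and p_s = (1/3)·exp(-d) for s ≠ t, is injective on {0,1,2} × (0,∞). -/
/-- The distribution of unrooted quartet gene trees identifies the unrooted
four-taxon species tree topology and its internal edge length: the map sending
a pair `(t, d)` with `t : Fin 3` (indexing the three unrooted quartet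
topologies) and `d > 0` to the probability vector `(p₀, p₁, p₂)` with
`p_t = 1 - (2/3)·exp(-d)` and `p_s = (1/3)·exp(-d)` for `s ≠ t`, is injective
on `{0,1,2} × (0,∞)`. -/
theorem quartet_distribution_identifies_tree :
    Set.InjOn
      (fun p : Fin 3 × ℝ => fun s : Fin 3 =>
        if s = p.1 then 1 - (2 / 3) * Real.exp (-p.2)
        else (1 / 3) * Real.exp (-p.2))
      {p : Fin 3 × ℝ | 0 < p.2} := by
  rintro ⟨t1, d1⟩ h1 ⟨t2, d2⟩ h2 heq
  simp only [Set.mem_setOf_eq] at h1 h2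
  have e1 : Real.exp (-d1) < 1 := by
    rw [Real.exp_lt_one_iff]; linarith
  have e2 : Real.exp (-d2) < 1 := by
    rw [Real.exp_lt_one_iff]; linarith
  have ep1 : 0 < Real.exp (-d1) := Real.exp_pos _
  have ep2 : 0 < Real.exp (-d2) := Real.exp_pos _
  have ht : t1 = t2 := by
    by_contra hne
    have := congrFun heq t1
    simp only [if_pos rfl, if_neg hne, if_true] at this
    nlinarith
  subst ht
  have := congrFun heq t1
  simp only [if_pos rfl, if_true] at this
  have hd : d1 = d2 := by
    have : Real.exp (-d1) = Real.exp (-d2) := by linarith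
    have := Real.exp_injective this
    linarith
  rw [hd]
end

section
/- Let S be a finite nonempty index set and let p, q : S → ℝ satisfy 0 ≤ p(s) ≤ 1 and 0 ≤ q(s) ≤ 1 for all s ∈ S. Define for ε > 0 the perturbed depths f_ε(p) = Σ_{s∈S} -log((3/2)·((1 + ε) - p(s))) and f_ε(q) = Σ_{s∈S} -log((3/2)·((1 + ε) - q(s))). If the number of indices s with p(s) = 1 is strictly greater than the number of indices s with q(s) = 1, then there exists c > 0 such that f_ε(p) > f_ε(q) for all ε with 0 < ε < c. -/
/-!
Summands with `r s = 1` equal `-log (3ε/2)`, which tends to `+∞` as `ε → 0⁺`; every other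
summand converges to the finite value `-log ((3/2)(1 - r s))`. Hence the difference of the two
depths is `(#{p = 1} - #{q = 1}) · (-log (3ε/2))` plus a convergent term, and so tends to `+∞`.
-/

open Filter Topology Real

namespace PerturbedDepth

variable {S : Type*} [Fintype S]

noncomputable def perturbedDepth (r : S → ℝ) (ε : ℝ) : ℝ :=
  ∑ s, -log ((3 / 2) * ((1 + ε) - r s))

noncomputable def numOnes (r : S → ℝ) : ℕ :=
  (Finset.univ.filter fun s => r s = 1).card

theorem perturbedDepth_eq_numOnes_mul_add (r : S → ℝ) (ε : ℝ) :
    perturbedDepth r ε = numOnes r * -log ((3 / 2) * ε) +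
      ∑ s ∈ Finset.univ.filter (fun s => r s ≠ 1), -log ((3 / 2) * ((1 + ε) - r s)) := by
  rw [perturbedDepth, ← Finset.sum_filter_add_sum_filter_not Finset.univ (fun s => r s = 1)]
  congr 1
  rw [Finset.sum_congr rfl fun s hs => by rw [(Finset.mem_filter.mp hs).2, add_sub_cancel_left],
    Finset.sum_const, nsmul_eq_mul, numOnes]

theorem tendsto_neg_log_const_mul_nhdsGT_zero {c : ℝ} (hc : 0 < c) :
    Tendsto (fun ε => -log (c * ε)) (𝓝[>] 0) atTop := by
  have hmul : Tendsto (fun ε => c * ε) (𝓝[>] 0) (𝓝[>] 0) :=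
    tendsto_nhdsWithin_of_tendsto_nhds_of_eventually_within _
      (by simpa using ((continuous_const_mul c).tendsto 0).mono_left nhdsWithin_le_nhds)
      (eventually_nhdsWithin_of_forall fun _ hε => mul_pos hc hε)
  exact tendsto_neg_atBot_atTop.comp (tendsto_log_nhdsGT_zero.comp hmul)

theorem continuousAt_neg_log_perturbed {x : ℝ} (hx : x ≠ 1) :
    ContinuousAt (fun ε => -log ((3 / 2) * ((1 + ε) - x))) 0 :=
  (ContinuousAt.log (by fun_prop) (by simpa [sub_eq_zero] using hx.symm)).neg

theorem tendsto_perturbedDepth_sub_atTop {p q : S → ℝ} (hcard : numOnes q < numOnes p) :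
    Tendsto (fun ε => perturbedDepth p ε - perturbedDepth q ε) (𝓝[>] 0) atTop := by
  set R : (S → ℝ) → ℝ → ℝ := fun r ε =>
    ∑ s ∈ Finset.univ.filter (fun s => r s ≠ 1), -log ((3 / 2) * ((1 + ε) - r s))
  have hR : ∀ r, Tendsto (R r) (𝓝 0) (𝓝 (R r 0)) := fun r =>
    tendsto_finsetSum _ fun _ hs =>
      (continuousAt_neg_log_perturbed (Finset.mem_filter.mp hs).2).tendsto
  have hsplit : (fun ε => perturbedDepth p ε - perturbedDepth q ε) = fun ε =>
      ((numOnes p : ℝ) - numOnes q) * -log ((3 / 2) * ε) + (R p ε - R q ε) := by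
    ext ε
    rw [perturbedDepth_eq_numOnes_mul_add, perturbedDepth_eq_numOnes_mul_add]
    ring
  rw [hsplit]
  exact ((tendsto_neg_log_const_mul_nhdsGT_zero (by norm_num)).const_mul_atTop
    (sub_pos.mpr (by exact_mod_cast hcard))).atTop_add
      (((hR p).sub (hR q)).mono_left nhdsWithin_le_nhds)

end PerturbedDepth

open PerturbedDepth

theorem perturbed_depth_compare_general {S : Type*} [Fintype S]
    (p q : S → ℝ)
    (hcard : (Finset.univ.filter fun s => p s = 1).card >
      (Finset.univ.filter fun s => q s = 1).card) :
    ∃ c > (0 : ℝ), ∀ ε : ℝ, 0 < ε → ε < c →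
      (∑ s, -Real.log ((3 / 2) * ((1 + ε) - p s))) >
        ∑ s, -Real.log ((3 / 2) * ((1 + ε) - q s)) := by
  have hpos : ∀ᶠ ε in 𝓝[>] 0, 0 < perturbedDepth p ε - perturbedDepth q ε :=
    (tendsto_perturbedDepth_sub_atTop hcard).eventually_gt_atTop 0
  obtain ⟨c, hc, hsub⟩ := mem_nhdsGT_iff_exists_Ioo_subset.mp hpos
  exact ⟨c, hc, fun ε hε hεc => sub_pos.mp (hsub ⟨hε, hεc⟩)⟩

/-- If the number of indices with `p(s) = 1` strictly exceeds the number of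
indices with `q(s) = 1`, then for all sufficiently small `ε > 0` the perturbed
depth of `p` exceeds that of `q`:
`Σ_s -log((3/2)·((1+ε) - p(s))) > Σ_s -log((3/2)·((1+ε) - q(s)))`. -/
theorem perturbed_depth_compare {S : Type*} [Fintype S] [Nonempty S]
    (p q : S → ℝ) (hp : ∀ s, 0 ≤ p s ∧ p s ≤ 1) (hq : ∀ s, 0 ≤ q s ∧ q s ≤ 1)
    (hcard : (Finset.univ.filter fun s => p s = 1).card >
      (Finset.univ.filter fun s => q s = 1).card) :
    ∃ c > (0 : ℝ), ∀ ε : ℝ, 0 < ε → ε < c →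
      (∑ s, -Real.log ((3 / 2) * ((1 + ε) - p s))) >
        ∑ s, -Real.log ((3 / 2) * ((1 + ε) - q s)) :=
  perturbed_depth_compare_general p q hcard
end
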